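/- For any Motzkin path m of order n, the fiber B(m) = {Dyck paths p of order n : θ(p) = m} under the projection θ satisfies sum over p in B(m) of q^(area(p)) t^(rk(p)) = q^(area(m)) * t^(rk(m)) * (1+qt)^(n-1-2*rk(m)). -/

import Mathlib

open Finset

/-- Number of up steps (`true`) among the first `k` steps of `p`. -/
def upCount {m : ℕ} (p : Fin m → Bool) (k : ℕ) : ℕ :=
  (Finset.univ.filter fun i : Fin m => (i : ℕ) < k ∧ p i = true).card

/-- Number of down steps (`false`) among the first `k` steps of `p`. -/
def downCount {m : ℕ} (p : Fin m → Bool) (k : ℕ) : ℕ :=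
  (Finset.univ.filter fun i : Fin m => (i : ℕ) < k ∧ p i = false).card

/-- `p` is a Dyck path of order `n`: a path of `2n` steps (up = `true`,
down = `false`), with `n` up steps, never going below the x-axis. -/
def IsDyck (n : ℕ) (p : Fin (2 * n) → Bool) : Prop :=
  upCount p (2 * n) = n ∧ ∀ k < 2 * n + 1, downCount p k ≤ upCount p k

instance (n : ℕ) : DecidablePred (IsDyck n) := fun p => by
  unfold IsDyck; infer_instance

/-- The Finset of Dyck paths of order `n`. -/
def dyckSet (n : ℕ) : Finset (Fin (2 * n) → Bool) :=
  Finset.univ.filter (IsDyck n)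

/-- Height of the path after `k` steps. -/
def height {n : ℕ} (p : Fin (2 * n) → Bool) (k : ℕ) : ℕ :=
  upCount p k - downCount p k

/-- The area of a Dyck path: the number of unused lattice points strictly below
the path and weakly above the x-axis (equivalently, the number of
`1/√2 × 1/√2` diamonds fitting between the path and the x-axis). -/
def area {n : ℕ} (p : Fin (2 * n) → Bool) : ℕ :=
  ∑ k ∈ Finset.range (2 * n + 1), height p k / 2

/-- The `j`-th step of `p` (defaulting to `false` out of range). -/
def stepAt {m : ℕ} (p : Fin m → Bool) (j : ℕ) : Bool :=
  if h : j < m then p ⟨j, h⟩ else false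

/-- The rank of a Dyck path of order `n` in the noncrossing partition lattice
under Stump's bijection: equivalently (Simion–Ullman) the number of letters `b`
and `r` in its SU-word, i.e. the number of `i ∈ {1,…,n-1}` for which the step
leaving the `i`-th odd lattice point (the step with index `2i-1`, 0-indexed)
is an up step. -/
def rk {n : ℕ} (p : Fin (2 * n) → Bool) : ℕ :=
  ((Finset.Icc 1 (n - 1)).filter fun i => stepAt p (2 * i - 1) = true).card

def upM {k : ℕ} (m : Fin k → Option Bool) (j : ℕ) : ℕ :=
  (Finset.univ.filter fun i : Fin k => (i : ℕ) < j ∧ m i = some true).card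

def downM {k : ℕ} (m : Fin k → Option Bool) (j : ℕ) : ℕ :=
  (Finset.univ.filter fun i : Fin k => (i : ℕ) < j ∧ m i = some false).card

/-- A Motzkin word (`some true` = up, `some false` = down, `none` = level):
as many ups as downs, every prefix having at least as many ups as downs.
A Motzkin path of order `n` is such a word of length `n-1`. -/
def IsMotzkin {k : ℕ} (m : Fin k → Option Bool) : Prop :=
  upM m k = downM m k ∧ ∀ j < k + 1, downM m j ≤ upM m j

instance (k : ℕ) : DecidablePred (IsMotzkin (k := k)) := fun m => by
  unfold IsMotzkin; infer_instance

/-- The Finset of Motzkin paths of order `n` (length `n-1`). -/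
def motzSet (n : ℕ) : Finset (Fin (n - 1) → Option Bool) :=
  Finset.univ.filter IsMotzkin

/-- The rank of a Motzkin path: its number of up steps. -/
def rkM {k : ℕ} (m : Fin k → Option Bool) : ℕ := upM m k

def mext {k : ℕ} (m : Fin k → Option Bool) (i : ℕ) : Option Bool :=
  if h : i < k then m ⟨i, h⟩ else none

/-- ρ : Motzkin paths of order `n` → Dyck paths of order `n`.  Prepend an up
step and append a down step; up steps become two up steps, down steps two down
steps, and each level step becomes a down-up pair. -/
def rho (n : ℕ) (m : Fin (n - 1) → Option Bool) : Fin (2 * n) → Bool := fun j =>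
  if (j : ℕ) = 0 then true
  else if (j : ℕ) = 2 * n - 1 then false
  else
    match mext m (((j : ℕ) - 1) / 2) with
    | some b => b
    | none => decide ((j : ℕ) % 2 = 0)

/-- The area of a Motzkin path is the area of the Dyck path `ρ(m)`. -/
def areaM (n : ℕ) (m : Fin (n - 1) → Option Bool) : ℕ := area (rho n m)

/-- θ : Dyck paths of order `n` → Motzkin paths of order `n`, joining
consecutive odd lattice points of the path: the segment between the `i`-th and
`(i+1)`-st odd points (steps `2i+1`, `2i+2`, 0-indexed) becomes an up, down, or
level step accordingly. -/
def theta (n : ℕ) (p : Fin (2 * n) → Bool) : Fin (n - 1) → Option Bool := fun i =>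
  match stepAt p (2 * (i : ℕ) + 1), stepAt p (2 * (i : ℕ) + 2) with
  | true, true => some true
  | false, false => some false
  | _, _ => none


/-!
The odd lattice points of a Dyck path `p` are the vertices of `θ(p)`, so their heights depend
only on `θ(p)`. Pairing each odd point `2i+1` with the even point after it gives
`area p = ∑ᵢ (h(2i+1) - 1) + rk p`, so `area - rk` is constant on every fiber of `θ`.
A path in the fiber of `m` starts up, ends down, and is fixed by choosing, at every level step
of `m`, an up-down or a down-up pair; `ρ(m)` takes down-up everywhere, and each up-down pair
adds one to the rank. Summing `(qt)^|S|` over the sets `S` of level steps, of which there are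
`n - 1 - 2 rk(m)`, gives the factor `(1 + qt)^(n - 1 - 2 rk(m))`.
-/

lemma stepAt_of_lt {M j : ℕ} (p : Fin M → Bool) (h : j < M) : stepAt p j = p ⟨j, h⟩ :=
  dif_pos h

@[simp]
lemma stepAt_val {M : ℕ} (p : Fin M → Bool) (j : Fin M) : stepAt p j = p j :=
  stepAt_of_lt p j.isLt

lemma lt_of_stepAt_eq_true {M j : ℕ} {p : Fin M → Bool} (h : stepAt p j = true) : j < M := by
  by_contra hj
  simp [stepAt, hj] at h

@[simp]
lemma mext_val {K : ℕ} (m : Fin K → Option Bool) (i : Fin K) : mext m i = m i :=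
  dif_pos i.isLt

lemma card_filter_val_lt_eq_count {K k : ℕ} (P : ℕ → Prop) [DecidablePred P] (hk : k ≤ K) :
    #{i : Fin K | (i : ℕ) < k ∧ P i} = Nat.count P k := by
  rw [Nat.count_eq_card_filter_range, ← card_map Fin.valEmbedding]
  congr 1
  ext j
  simp only [mem_map, mem_filter, mem_univ, true_and, Fin.valEmbedding_apply, mem_range]
  exact ⟨fun ⟨i, hi, hij⟩ => hij ▸ hi, fun hj => ⟨⟨j, by omega⟩, hj, rfl⟩⟩

section Counts

variable {M K k : ℕ}

lemma upCount_eq_count (p : Fin M → Bool) (hk : k ≤ M) :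
    upCount p k = Nat.count (fun j => stepAt p j = true) k := by
  rw [← card_filter_val_lt_eq_count _ hk]; simp only [upCount, stepAt_val]

lemma downCount_eq_count (p : Fin M → Bool) (hk : k ≤ M) :
    downCount p k = Nat.count (fun j => stepAt p j = false) k := by
  rw [← card_filter_val_lt_eq_count _ hk]; simp only [downCount, stepAt_val]

lemma upM_eq_count (m : Fin K → Option Bool) (hk : k ≤ K) :
    upM m k = Nat.count (fun i => mext m i = some true) k := by
  rw [← card_filter_val_lt_eq_count _ hk]; simp only [upM, mext_val]

lemma downM_eq_count (m : Fin K → Option Bool) (hk : k ≤ K) :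
    downM m k = Nat.count (fun i => mext m i = some false) k := by
  rw [← card_filter_val_lt_eq_count _ hk]; simp only [downM, mext_val]

lemma upCount_succ (p : Fin M → Bool) (hk : k < M) :
    upCount p (k + 1) = upCount p k + if stepAt p k = true then 1 else 0 := by
  rw [upCount_eq_count p hk, upCount_eq_count p hk.le, Nat.count_succ]

lemma downCount_succ (p : Fin M → Bool) (hk : k < M) :
    downCount p (k + 1) = downCount p k + if stepAt p k = false then 1 else 0 := by
  rw [downCount_eq_count p hk, downCount_eq_count p hk.le, Nat.count_succ]

lemma upM_succ (m : Fin K → Option Bool) (hk : k < K) :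
    upM m (k + 1) = upM m k + if mext m k = some true then 1 else 0 := by
  rw [upM_eq_count m hk, upM_eq_count m hk.le, Nat.count_succ]

lemma downM_succ (m : Fin K → Option Bool) (hk : k < K) :
    downM m (k + 1) = downM m k + if mext m k = some false then 1 else 0 := by
  rw [downM_eq_count m hk, downM_eq_count m hk.le, Nat.count_succ]

lemma upCount_add_downCount (p : Fin M → Bool) (hk : k ≤ M) :
    upCount p k + downCount p k = k := by
  rw [upCount_eq_count p hk, downCount_eq_count p hk]
  clear hk
  induction k with
  | zero => simp
  | succ k ih =>
    cases h : stepAt p k <;>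
      simp only [Nat.count_succ, h, Bool.false_eq_true, Bool.true_eq_false, ↓reduceIte,
        add_zero] <;> omega

lemma upM_add_downM_add_count (m : Fin K → Option Bool) (hk : k ≤ K) :
    upM m k + downM m k + Nat.count (fun i => mext m i = none) k = k := by
  rw [upM_eq_count m hk, downM_eq_count m hk]
  clear hk
  induction k with
  | zero => simp
  | succ k ih =>
    rcases h : mext m k with _ | _ | _ <;>
      simp only [Nat.count_succ, h, Option.some.injEq, Bool.false_eq_true, Bool.true_eq_false,
        reduceCtorEq, ↓reduceIte, add_zero] <;> omega

end Counts

lemma upCount_two_mul {n : ℕ} (p : Fin (2 * n) → Bool) (hn : 1 ≤ n) :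
    upCount p (2 * n) = upCount p (2 * n - 1) + if stepAt p (2 * n - 1) = true then 1 else 0 := by
  rw [← upCount_succ p (by omega), Nat.sub_add_cancel (by omega)]

namespace IsDyck

variable {n : ℕ} {p : Fin (2 * n) → Bool}

lemma stepAt_zero (hp : IsDyck n p) (hn : 1 ≤ n) : stepAt p 0 = true := by
  have h := hp.2 1 (by omega)
  rw [upCount_succ p (by omega), downCount_succ p (by omega)] at h
  cases h0 : stepAt p 0 <;> simp_all [upCount, downCount]

lemma stepAt_last (hp : IsDyck n p) (hn : 1 ≤ n) : stepAt p (2 * n - 1) = false := by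
  have hle := hp.2 (2 * n - 1) (by omega)
  have hsum := upCount_add_downCount p (k := 2 * n - 1) (by omega)
  have htotal := upCount_two_mul p hn
  rw [hp.1] at htotal
  cases h : stepAt p (2 * n - 1)
  · rfl
  · simp only [h, if_true] at htotal
    omega

end IsDyck

/-- `getD` covers both kinds of pair: `(c, c)` when `m i = some c`, `(a, !a)` at a level step. -/
lemma theta_eq_iff {n : ℕ} {p : Fin (2 * n) → Bool} {m : Fin (n - 1) → Option Bool} :
    theta n p = m ↔ ∀ i < n - 1, ∃ a,
      stepAt p (2 * i + 1) = (mext m i).getD a ∧ stepAt p (2 * i + 2) = (mext m i).getD !a := by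
  rw [funext_iff, Fin.forall_iff]
  refine forall₂_congr fun i hi => ?_
  rw [← mext_val m ⟨i, hi⟩]
  simp only [theta]
  cases stepAt p (2 * i + 1) <;> cases stepAt p (2 * i + 2) <;>
    rcases mext m i with _ | _ | _ <;> simp

lemma counts_odd_of_theta_eq {n : ℕ} {p : Fin (2 * n) → Bool}
    {m : Fin (n - 1) → Option Bool} (h0 : stepAt p 0 = true) (hθ : theta n p = m) {i : ℕ}
    (hi : i ≤ n - 1) :
    upCount p (2 * i + 1) = 1 + 2 * upM m i + Nat.count (fun l => mext m l = none) i ∧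
      downCount p (2 * i + 1) = 2 * downM m i + Nat.count (fun l => mext m l = none) i := by
  have hpos := lt_of_stepAt_eq_true h0
  induction i with
  | zero =>
    rw [upCount_succ p hpos, downCount_succ p hpos]
    simp [h0, upCount, downCount, upM, downM]
  | succ i ih =>
    have hi' : i < n - 1 := by omega
    obtain ⟨ihU, ihD⟩ := ih hi'.le
    obtain ⟨a, h1, h2⟩ := theta_eq_iff.1 hθ i hi'
    rw [show 2 * (i + 1) + 1 = 2 * i + 1 + 1 + 1 by ring, upCount_succ p (by omega),
      upCount_succ p (by omega), downCount_succ p (by omega), downCount_succ p (by omega),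
      upM_succ m hi', downM_succ m hi', Nat.count_succ, ihU, ihD,
      show 2 * i + 1 + 1 = 2 * i + 2 by ring, h1, h2]
    rcases mext m i with _ | _ | _ <;> cases a <;>
      simp only [Option.getD_none, Option.getD_some, Bool.not_false, Bool.not_true,
        Option.some.injEq, Bool.false_eq_true, Bool.true_eq_false, reduceCtorEq, ↓reduceIte,
        add_zero, true_and, and_true] <;> omega

lemma isDyck_of_theta_eq {n : ℕ} {p : Fin (2 * n) → Bool} {m : Fin (n - 1) → Option Bool}
    (hm : IsMotzkin m) (hθ : theta n p = m) (h0 : stepAt p 0 = true)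
    (hlast : stepAt p (2 * n - 1) = false) : IsDyck n p := by
  have hn : 1 ≤ n := by have := lt_of_stepAt_eq_true h0; omega
  have hodd := fun i (hi : i ≤ n - 1) => counts_odd_of_theta_eq h0 hθ hi
  have hodd_lt : ∀ i ≤ n - 1, downCount p (2 * i + 1) < upCount p (2 * i + 1) := by
    intro i hi
    have := hm.2 i (by omega)
    have := hodd i hi
    omega
  have heven : ∀ i ≤ n - 1, downCount p (2 * i + 2) ≤ upCount p (2 * i + 2) := by
    intro i hi
    have := hodd_lt i hi
    rw [upCount_succ p (by omega), downCount_succ p (by omega)]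
    split_ifs <;> omega
  constructor
  · have hpart := upM_add_downM_add_count m (le_refl (n - 1))
    have hlastOdd := hodd (n - 1) le_rfl
    rw [upCount_two_mul p hn, hlast, show 2 * n - 1 = 2 * (n - 1) + 1 by omega]
    simp only [Bool.false_eq_true, if_false]
    have := hm.1
    omega
  · intro k hk
    obtain ⟨i, rfl | rfl⟩ := Nat.even_or_odd' k
    · rcases i with _ | i
      · simp [upCount, downCount]
      · exact heven i (by omega)
    · exact (hodd_lt i (by omega)).le

lemma Finset.sum_range_two_mul_add_one {M : Type*} [AddCommMonoid M] (f : ℕ → M) (N : ℕ) :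
    ∑ k ∈ range (2 * N + 1), f k =
      f 0 + ∑ i ∈ range N, (f (2 * i + 1) + f (2 * i + 2)) := by
  induction N with
  | zero => simp
  | succ N ih =>
    rw [show 2 * (N + 1) + 1 = 2 * N + 1 + 1 + 1 by ring, sum_range_succ, sum_range_succ, ih,
      sum_range_succ, add_assoc, add_assoc]

lemma rk_eq_card {n : ℕ} (p : Fin (2 * n) → Bool) :
    rk p = #{i ∈ range (n - 1) | stepAt p (2 * i + 1) = true} := by
  refine card_nbij' (· - 1) (· + 1) ?_ ?_ ?_ ?_ <;> intro i hi <;>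
    simp only [coe_filter, mem_Icc, Set.mem_ofPred_eq, mem_range] at hi ⊢
  · exact ⟨by omega, by rw [show 2 * (i - 1) + 1 = 2 * i - 1 by omega]; exact hi.2⟩
  · exact ⟨by omega, by rw [show 2 * (i + 1) - 1 = 2 * i + 1 by omega]; exact hi.2⟩
  · omega
  · omega

lemma IsDyck.area_eq_sum_add_rk {n : ℕ} {p : Fin (2 * n) → Bool} (hp : IsDyck n p)
    (hn : 1 ≤ n) : area p = ∑ i ∈ range (n - 1), (height p (2 * i + 1) - 1) + rk p := by
  have hsum := fun k (hk : k ≤ 2 * n) => upCount_add_downCount p hk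
  have htail : height p (2 * n - 1) / 2 + height p (2 * n) / 2 = 0 := by
    have htotal := upCount_two_mul p hn
    rw [hp.stepAt_last hn] at htotal
    have := hsum (2 * n - 1) (by omega)
    have := hsum (2 * n) le_rfl
    have := hp.1
    simp only [Bool.false_eq_true, if_false] at htotal
    simp only [height]
    omega
  have hpair : ∀ i ∈ range (n - 1), height p (2 * i + 1) / 2 + height p (2 * i + 2) / 2 =
      height p (2 * i + 1) - 1 + if stepAt p (2 * i + 1) = true then 1 else 0 := by
    intro i hi
    rw [mem_range] at hi
    have := hsum (2 * i + 1) (by omega)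
    have := hp.2 (2 * i + 1) (by omega)
    have := hp.2 (2 * i + 2) (by omega)
    have hup := upCount_succ p (k := 2 * i + 1) (by omega)
    have hdown := downCount_succ p (k := 2 * i + 1) (by omega)
    rw [show 2 * i + 1 + 1 = 2 * i + 2 by ring] at hup hdown
    simp only [height]
    cases h : stepAt p (2 * i + 1) <;>
      simp only [h, Bool.false_eq_true, Bool.true_eq_false, if_true, if_false] at hup hdown ⊢ <;>
      omega
  rw [area, show 2 * n + 1 = 2 * (n - 1) + 1 + 1 + 1 by omega, sum_range_succ, sum_range_succ,
    sum_range_two_mul_add_one, show 2 * (n - 1) + 1 = 2 * n - 1 by omega,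
    show 2 * (n - 1) + 2 = 2 * n by omega, add_assoc _ (height p (2 * n - 1) / 2), htail,
    sum_congr rfl hpair, sum_add_distrib, rk_eq_card, card_filter]
  simp [height, upCount, downCount]

lemma area_add_rk_eq_of_theta_eq {n : ℕ} {p p' : Fin (2 * n) → Bool} (hn : 1 ≤ n)
    (hp : IsDyck n p) (hp' : IsDyck n p') (h : theta n p = theta n p') :
    area p + rk p' = area p' + rk p := by
  have hheight : ∀ i ∈ range (n - 1), height p (2 * i + 1) = height p' (2 * i + 1) := by
    intro i hi
    have hi : i ≤ n - 1 := (mem_range.1 hi).le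
    obtain ⟨hU, hD⟩ := counts_odd_of_theta_eq (hp.stepAt_zero hn) h hi
    obtain ⟨hU', hD'⟩ := counts_odd_of_theta_eq (hp'.stepAt_zero hn) rfl hi
    rw [height, height, hU, hD, hU', hD']
  rw [hp.area_eq_sum_add_rk hn, hp'.area_eq_sum_add_rk hn,
    sum_congr rfl fun i hi => by rw [hheight i hi]]
  ring

lemma path_ext {n : ℕ} {p p' : Fin (2 * n) → Bool} (h0 : stepAt p 0 = stepAt p' 0)
    (hlast : stepAt p (2 * n - 1) = stepAt p' (2 * n - 1))
    (hpairs : ∀ i < n - 1, stepAt p (2 * i + 1) = stepAt p' (2 * i + 1) ∧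
      stepAt p (2 * i + 2) = stepAt p' (2 * i + 2)) :
    p = p' := by
  funext j
  rw [← stepAt_val p j, ← stepAt_val p' j]
  have hj := j.isLt
  obtain ⟨i, hi | hi⟩ := Nat.even_or_odd' (j : ℕ) <;> rw [hi] <;> rw [hi] at hj
  · rcases i with _ | i
    · exact h0
    · exact (hpairs i (by omega)).2
  · by_cases hlt : i < n - 1
    · exact (hpairs i hlt).1
    · rwa [show 2 * i + 1 = 2 * n - 1 by omega]

def levels {K : ℕ} (m : Fin K → Option Bool) : Finset ℕ :=
  {i ∈ range K | mext m i = none}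

lemma card_levels {K : ℕ} {m : Fin K → Option Bool} (hm : IsMotzkin m) :
    #(levels m) = K - 2 * rkM m := by
  have := upM_add_downM_add_count m le_rfl
  have := hm.1
  rw [levels, ← Nat.count_eq_card_filter_range, rkM]
  omega

/-- The path with first step up, last step down, and pair `i` equal to `(c, c)` when
`m i = some c`; at a level step `i` the pair is up-down if `i ∈ S` and down-up otherwise. -/
def fiberPath (n : ℕ) (m : Fin (n - 1) → Option Bool) (S : Finset ℕ) : Fin (2 * n) → Bool :=
  fun j =>
    if (j : ℕ) = 0 then true
    else if (j : ℕ) = 2 * n - 1 then false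
    else (mext m (((j : ℕ) - 1) / 2)).getD
      (decide (((j : ℕ) - 1) / 2 ∈ S) != decide ((j : ℕ) % 2 = 0))

def switchedLevels {n : ℕ} (m : Fin (n - 1) → Option Bool) (p : Fin (2 * n) → Bool) :
    Finset ℕ :=
  {i ∈ levels m | stepAt p (2 * i + 1) = true}

section FiberPath

variable {n : ℕ} (m : Fin (n - 1) → Option Bool) (S : Finset ℕ)

lemma fiberPath_empty : fiberPath n m ∅ = rho n m := by
  funext j
  simp only [fiberPath, rho, notMem_empty, decide_false, Bool.false_bne]
  cases mext m (((j : ℕ) - 1) / 2) <;> rfl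

lemma stepAt_fiberPath_zero (hn : 1 ≤ n) : stepAt (fiberPath n m S) 0 = true := by
  rw [stepAt_of_lt _ (by omega)]
  simp [fiberPath]

lemma stepAt_fiberPath_last (hn : 1 ≤ n) : stepAt (fiberPath n m S) (2 * n - 1) = false := by
  rw [stepAt_of_lt _ (by omega)]
  simp [fiberPath, show 2 * n - 1 ≠ 0 by omega]

lemma stepAt_fiberPath_odd {i : ℕ} (hi : i < n - 1) :
    stepAt (fiberPath n m S) (2 * i + 1) = (mext m i).getD (decide (i ∈ S)) := by
  rw [stepAt_of_lt _ (by omega)]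
  simp [fiberPath, show 2 * i + 1 ≠ 2 * n - 1 by omega]

lemma stepAt_fiberPath_even {i : ℕ} (hi : i < n - 1) :
    stepAt (fiberPath n m S) (2 * i + 2) = (mext m i).getD (!decide (i ∈ S)) := by
  rw [stepAt_of_lt _ (by omega)]
  simp [fiberPath, show 2 * i + 2 ≠ 2 * n - 1 by omega, show (2 * i + 1) / 2 = i by omega]

lemma theta_fiberPath : theta n (fiberPath n m S) = m :=
  theta_eq_iff.2 fun _ hi => ⟨_, stepAt_fiberPath_odd m S hi, stepAt_fiberPath_even m S hi⟩

variable {m S}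

lemma isDyck_fiberPath (hn : 1 ≤ n) (hm : IsMotzkin m) : IsDyck n (fiberPath n m S) :=
  isDyck_of_theta_eq hm (theta_fiberPath m S) (stepAt_fiberPath_zero m S hn)
    (stepAt_fiberPath_last m S hn)

lemma fiberPath_switchedLevels (hn : 1 ≤ n) {p : Fin (2 * n) → Bool} (hp : IsDyck n p)
    (hθ : theta n p = m) : fiberPath n m (switchedLevels m p) = p := by
  refine path_ext ?_ ?_ fun i hi => ?_
  · rw [stepAt_fiberPath_zero _ _ hn, hp.stepAt_zero hn]
  · rw [stepAt_fiberPath_last _ _ hn, hp.stepAt_last hn]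
  · obtain ⟨a, h1, h2⟩ := theta_eq_iff.1 hθ i hi
    rw [stepAt_fiberPath_odd _ _ hi, stepAt_fiberPath_even _ _ hi, h1, h2]
    rcases hmi : mext m i with _ | c
    · simp [switchedLevels, levels, hi, hmi, h1]
    · simp

lemma switchedLevels_fiberPath (hS : S ⊆ levels m) :
    switchedLevels m (fiberPath n m S) = S := by
  ext i
  simp only [switchedLevels, levels, mem_filter, mem_range]
  constructor
  · rintro ⟨⟨hi, hmi⟩, hup⟩
    simpa [stepAt_fiberPath_odd m S hi, hmi] using hup
  · intro hiS
    obtain ⟨hi, hmi⟩ : i < n - 1 ∧ mext m i = none := by simpa [levels] using hS hiS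
    simp [hi, hmi, stepAt_fiberPath_odd m S hi, hiS]

lemma rk_fiberPath (hS : S ⊆ levels m) : rk (fiberPath n m S) = rkM m + #S := by
  have hsplit : ∀ i ∈ range (n - 1),
      (if stepAt (fiberPath n m S) (2 * i + 1) = true then 1 else 0) =
        (if mext m i = some true then 1 else 0) + if i ∈ S then 1 else 0 := by
    intro i hi
    rw [stepAt_fiberPath_odd m S (mem_range.1 hi)]
    rcases hmi : mext m i with _ | c
    · simp
    · have hiS : i ∉ S := fun h => by simpa [levels, hmi] using hS h
      cases c <;> simp [hiS]
  rw [rk_eq_card, card_filter, sum_congr rfl hsplit, sum_add_distrib, ← card_filter,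
    ← card_filter, ← Nat.count_eq_card_filter_range, rkM, upM_eq_count m le_rfl,
    filter_mem_eq_inter, inter_eq_right.2 (hS.trans (filter_subset _ _))]

lemma area_fiberPath (hn : 1 ≤ n) (hm : IsMotzkin m) (hS : S ⊆ levels m) :
    area (fiberPath n m S) = areaM n m + #S := by
  have h := area_add_rk_eq_of_theta_eq hn (isDyck_fiberPath hn hm) (isDyck_fiberPath hn hm)
    ((theta_fiberPath m S).trans (theta_fiberPath m ∅).symm)
  rw [rk_fiberPath hS, rk_fiberPath (empty_subset _), card_empty, fiberPath_empty] at h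
  rw [areaM]
  omega

end FiberPath

/-- For a Motzkin path `m` of order `n`, the fiber `B(m)` of the projection `θ`
satisfies `∑_{p ∈ B(m)} q^area(p) t^rk(p)
= q^area(m) t^rk(m) (1+qt)^(n-1-2 rk(m))`. -/
theorem fiber_generating_function (n : ℕ) (hn : 1 ≤ n) (q t : ℝ)
    (m : Fin (n - 1) → Option Bool) (hm : m ∈ motzSet n) :
    (∑ p ∈ (dyckSet n).filter (fun p => theta n p = m),
        q ^ area p * t ^ rk p) =
      q ^ areaM n m * t ^ rkM m * (1 + q * t) ^ (n - 1 - 2 * rkM m) := by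
  have hm : IsMotzkin m := (mem_filter.1 hm).2
  calc ∑ p ∈ (dyckSet n).filter (fun p => theta n p = m), q ^ area p * t ^ rk p
      = ∑ S ∈ (levels m).powerset, q ^ area (fiberPath n m S) * t ^ rk (fiberPath n m S) := by
        refine (sum_nbij' (fiberPath n m) (switchedLevels m)
          (fun S _ => mem_filter.2 ⟨by simpa [dyckSet] using isDyck_fiberPath hn hm,
            theta_fiberPath m S⟩)
          (fun p _ => mem_powerset.2 (filter_subset _ _))
          (fun S hS => switchedLevels_fiberPath (mem_powerset.1 hS))
          (fun p hp => ?_) (fun _ _ => rfl)).symm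
        obtain ⟨hp, hθ⟩ := mem_filter.1 hp
        exact fiberPath_switchedLevels hn (mem_filter.1 hp).2 hθ
    _ = ∑ S ∈ (levels m).powerset,
          q ^ areaM n m * t ^ rkM m * ((q * t) ^ #S * 1 ^ (#(levels m) - #S)) := by
        refine sum_congr rfl fun S hS => ?_
        rw [area_fiberPath hn hm (mem_powerset.1 hS), rk_fiberPath (mem_powerset.1 hS)]
        ring
    _ = q ^ areaM n m * t ^ rkM m * (1 + q * t) ^ (n - 1 - 2 * rkM m) := by
        rw [← mul_sum, sum_pow_mul_eq_add_pow, add_comm, card_levels hm]
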